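/- arXiv:1908.10724 — 2 statements merged into one kernel-verified Lean document; each statement's English description precedes it below -/
import Mathlib

section
/- If Z : Conv(ℝⁿ) → ℝ is a continuous valuation, then for every m ∈ ℕ and all u₁,…,u_m ∈ Conv(ℝⁿ) such that the pointwise minimum u₁ ∧ ⋯ ∧ u_m belongs to Conv(ℝⁿ) and such that u_J := ⋁_{j∈J} u_j belongs to Conv(ℝⁿ) for every nonempty J ⊂ {1,…,m}, one has Z(u₁ ∧ ⋯ ∧ u_m) = Σ_{∅≠J⊂{1,…,m}} (−1)^{|J|−1} Z(u_J). -/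
open Filter Topology MeasureTheory

noncomputable section

/-- Euclidean space `ℝⁿ`. -/
abbrev Vn (n : ℕ) := EuclideanSpace ℝ (Fin n)

/-- `u : ℝⁿ → ℝ ∪ {+∞}` (represented as an `EReal`-valued function that never
takes the value `⊥ = -∞`) is convex. -/
def IsConvexFn {n : ℕ} (u : Vn n → EReal) : Prop :=
  ∀ x y : Vn n, ∀ t : ℝ, 0 < t → t < 1 →
    u (t • x + (1 - t) • y) ≤ (t : EReal) * u x + ((1 - t : ℝ) : EReal) * u y

/-- `Conv(ℝⁿ)`: convex, lower semicontinuous, proper functions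
`ℝⁿ → ℝ ∪ {+∞}`. -/
def ConvSet (n : ℕ) : Set (Vn n → EReal) :=
  {u | IsConvexFn u ∧ LowerSemicontinuous u ∧ (∀ x, u x ≠ ⊥) ∧ (∃ x, u x ≠ ⊤)}

/-- `Conv_sc(ℝⁿ)`: super-coercive elements of `Conv(ℝⁿ)`, i.e.
`u(x)/|x| → +∞` as `|x| → +∞`. -/
def ConvSc (n : ℕ) : Set (Vn n → EReal) :=
  {u | u ∈ ConvSet n ∧
    ∀ M : ℝ, ∃ R : ℝ, ∀ x : Vn n, R ≤ ‖x‖ → ((M * ‖x‖ : ℝ) : EReal) ≤ u x}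

/-- Epi-convergence of a sequence `uk` to `u`. -/
def EpiConverges {n : ℕ} (uk : ℕ → Vn n → EReal) (u : Vn n → EReal) : Prop :=
  ∀ x : Vn n,
    (∀ xk : ℕ → Vn n, Tendsto xk atTop (𝓝 x) →
      u x ≤ liminf (fun k => uk k (xk k)) atTop) ∧
    (∃ xk : ℕ → Vn n, Tendsto xk atTop (𝓝 x) ∧
      Tendsto (fun k => uk k (xk k)) atTop (𝓝 (u x)))

/-- Continuity (with respect to epi-convergence) of a functional on a class `X`. -/
def ContinuousVal {n : ℕ} (X : Set (Vn n → EReal)) (Z : (Vn n → EReal) → ℝ) : Prop :=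
  ∀ (uk : ℕ → Vn n → EReal) (u : Vn n → EReal),
    (∀ k, uk k ∈ X) → u ∈ X → EpiConverges uk u →
      Tendsto (fun k => Z (uk k)) atTop (𝓝 (Z u))

/-- The valuation property on a class `X` (here `⊔`, `⊓` are the pointwise
maximum and minimum). -/
def IsValuation {n : ℕ} (X : Set (Vn n → EReal)) (Z : (Vn n → EReal) → ℝ) : Prop :=
  ∀ u v : Vn n → EReal, u ∈ X → v ∈ X → u ⊔ v ∈ X → u ⊓ v ∈ X →
    Z (u ⊔ v) + Z (u ⊓ v) = Z u + Z v

/-- Epi-translation invariance: invariance under `u ↦ u(· - x₀) + c`. -/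
def EpiTranslationInvariant {n : ℕ} (X : Set (Vn n → EReal)) (Z : (Vn n → EReal) → ℝ) : Prop :=
  ∀ u ∈ X, ∀ x₀ : Vn n, ∀ c : ℝ, Z (fun x => u (x - x₀) + (c : EReal)) = Z u

-- Epi-multiplication `λ ⊡ u`; for `λ = 0` it is the indicator of `{0}`.
open Classical in
def epiMul {n : ℕ} (l : ℝ) (u : Vn n → EReal) : Vn n → EReal :=
  if l = 0 then (fun x => if x = 0 then (0 : EReal) else ⊤)
  else fun x => (l : EReal) * u (l⁻¹ • x)

/-- `Z` is epi-homogeneous of degree `α`: `Z(λ ⊡ u) = λ^α Z(u)` for `λ > 0`. -/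
def EpiHomogeneous {n : ℕ} (X : Set (Vn n → EReal)) (Z : (Vn n → EReal) → ℝ) (α : ℝ) : Prop :=
  ∀ u ∈ X, ∀ l : ℝ, 0 < l → Z (epiMul l u) = l ^ α * Z u

/-! Each `u j` is the supremum of countably many affine minorants (Hahn–Banach and Lindelöf), so
the maxima `q k j` of the first `k + 1` of them increase to `u j`. For such piecewise affine `q`
and `w = u₁ ∧ ⋯ ∧ u_m ≥ min_j q j`, inclusion–exclusion `Z w = ∑ (-1)^(|J|-1) Z (w ∨ q_J)` holds
exactly: cutting along a hyperplane `φ = 0` is compatible with the valuation property, because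
`f + δ_{φ≥0}` and `f + δ_{φ≤0}` have maximum `f + δ_{φ=0}` and minimum `f`; after cutting along
all hyperplanes where two affine pieces agree, the `q j` are totally ordered on each cell and the
alternating sum telescopes. As `k → ∞`, `w ∨ q_J` increases to `u_J`, hence epi-converges, and
continuity of `Z` passes the identity to the limit. -/

open Set

section Preliminaries

lemma EReal.coe_le_of_forall_le_coe {b : ℝ} {y : EReal} (h : ∀ t : ℝ, y ≤ t → b ≤ t) :
    (b : EReal) ≤ y :=
  EReal.le_of_forall_lt_iff_le.1 fun z hz => by exact_mod_cast h z hz.le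

lemma EReal.coe_mul_add_coe_mul_eq_top {t s : ℝ} (ht : 0 < t) (hs : 0 < s) {a b : EReal}
    (ha : a ≠ ⊥) (hb : b ≠ ⊥) (h : a = ⊤ ∨ b = ⊤) : (t : EReal) * a + s * b = ⊤ := by
  have hmul : ∀ {r : ℝ}, 0 < r → ∀ {c : EReal}, c ≠ ⊥ → (r : EReal) * c ≠ ⊥ := by
    intro r hr c hc
    induction c with
    | bot => exact absurd rfl hc
    | coe c => exact_mod_cast EReal.coe_ne_bot (r * c)
    | top => simp [EReal.mul_top_of_pos (EReal.coe_pos.2 hr)]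
  rcases h with rfl | rfl
  · rw [EReal.mul_top_of_pos (EReal.coe_pos.2 ht)]
    exact EReal.top_add_of_ne_bot (hmul hs hb)
  · rw [EReal.mul_top_of_pos (EReal.coe_pos.2 hs)]
    exact EReal.add_top_of_ne_bot (hmul ht ha)

lemma EReal.coe_mul_add_coe_mul_le {t s : ℝ} (ht : 0 ≤ t) (hs : 0 ≤ s) {a a' b b' : EReal}
    (ha : a ≤ a') (hb : b ≤ b') : (t : EReal) * a + s * b ≤ t * a' + s * b' :=
  add_le_add (mul_le_mul_of_nonneg_left ha (EReal.coe_nonneg.2 ht))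
    (mul_le_mul_of_nonneg_left hb (EReal.coe_nonneg.2 hs))

lemma exists_forall_of_total {ι : Type*} [Finite ι] [Nonempty ι] {r : ι → ι → Prop}
    (htot : ∀ i j, r i j ∨ r j i) (htrans : ∀ i j k, r i j → r j k → r i k) :
    ∃ i, ∀ j, r i j := by
  have := Fintype.ofFinite ι
  let _ : LE ι := ⟨r⟩
  have : IsTrans ι (· ≥ ·) := ⟨fun a b c hab hbc => htrans c b a hbc hab⟩
  obtain ⟨i, hi⟩ := Finset.exists_minimal (s := (Finset.univ : Finset ι)) Finset.univ_nonempty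
  exact ⟨i, fun j => (htot i j).elim id fun hji => hi.2 (Finset.mem_univ j) hji⟩

lemma nonneg_of_forall_le_add_mul {a b c t₀ : ℝ} (h : ∀ t, t₀ ≤ t → c ≤ b + a * t) : 0 ≤ a := by
  by_contra! ha
  have hle := h _ (le_max_left t₀ ((c - b - 1) / a))
  have : a * max t₀ ((c - b - 1) / a) ≤ a * ((c - b - 1) / a) :=
    mul_le_mul_of_nonpos_left (le_max_right _ _) ha.le
  rw [mul_div_cancel₀ _ ha.ne] at this
  linarith

lemma sum_nonempty_neg_one_pow_of_insert_eq {ι β : Type*} [Fintype ι] [DecidableEq ι]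
    [CommRing β] (F : Finset ι → β) (j₀ : ι)
    (hF : ∀ J : Finset ι, J.Nonempty → F (insert j₀ J) = F J) :
    ∑ J ∈ Finset.univ.powerset.filter (fun J : Finset ι => J.Nonempty),
      (-1 : β) ^ (J.card - 1) * F J = F {j₀} := by
  rw [Finset.sum_filter, ← Finset.insert_erase (Finset.mem_univ j₀),
    Finset.sum_powerset_insert (Finset.notMem_erase j₀ _), ← Finset.sum_add_distrib]
  have hpair : ∀ J ∈ (Finset.univ.erase j₀).powerset,
      ((if J.Nonempty then (-1 : β) ^ (J.card - 1) * F J else 0) +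
        if (insert j₀ J).Nonempty then (-1 : β) ^ ((insert j₀ J).card - 1) * F (insert j₀ J)
        else 0) = if J = ∅ then F {j₀} else 0 := by
    intro J hJ
    have hj₀ : j₀ ∉ J := fun h => Finset.notMem_erase j₀ _ (Finset.mem_powerset.1 hJ h)
    obtain rfl | hne := J.eq_empty_or_nonempty
    · simp
    · rw [if_pos hne, if_pos (Finset.insert_nonempty _ _), if_neg hne.ne_empty, hF J hne,
        Finset.card_insert_of_notMem hj₀]
      obtain ⟨k, hk⟩ := Nat.exists_eq_add_of_lt hne.card_pos
      rw [hk]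
      simp [pow_succ]
  rw [Finset.sum_congr rfl hpair, Finset.sum_ite_eq' _ ∅, if_pos (Finset.empty_mem_powerset _)]

end Preliminaries

section MaxAffine

def SignConstOn {X : Type*} (D : Set X) (ψ : X → ℝ) : Prop :=
  (∀ x ∈ D, 0 ≤ ψ x) ∨ (∀ x ∈ D, ψ x ≤ 0)

lemma SignConstOn.mono {X : Type*} {D D' : Set X} {ψ : X → ℝ} (h : SignConstOn D ψ)
    (hD : D' ⊆ D) : SignConstOn D' ψ :=
  h.imp (fun h x hx => h x (hD hx)) (fun h x hx => h x (hD hx))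

lemma Finset.sup'_le_or_ge_on {X ι : Type*} {s s' : Finset ι} (hs : s.Nonempty)
    (hs' : s'.Nonempty) {g g' : ι → X → ℝ} {D : Set X}
    (h : ∀ a ∈ s, ∀ b ∈ s', SignConstOn D (g a - g' b)) :
    (∀ x ∈ D, s.sup' hs g x ≤ s'.sup' hs' g' x) ∨ (∀ x ∈ D, s'.sup' hs' g' x ≤ s.sup' hs g x) := by
  by_cases hle : ∀ x ∈ D, s.sup' hs g x ≤ s'.sup' hs' g' x
  · exact Or.inl hle
  push Not at hle
  obtain ⟨x₀, hx₀, hlt⟩ := hle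
  simp only [Finset.sup'_apply] at hlt ⊢
  obtain ⟨a, ha, hax₀⟩ := Finset.exists_mem_eq_sup' hs fun a => g a x₀
  refine Or.inr fun x hx => Finset.sup'_le _ _ fun b hb => ?_
  rcases h a ha b hb with hpos | hneg
  · exact (sub_nonneg.1 (hpos x hx)).trans (Finset.le_sup' (fun a => g a x) ha)
  · have hb₀ : g a x₀ ≤ g' b x₀ := sub_nonpos.1 (hneg x₀ hx₀)
    have := Finset.le_sup' (fun b => g' b x₀) hb
    linarith

lemma AffineMap.convexOn_univ {E : Type*} [AddCommGroup E] [Module ℝ E] (ℓ : E →ᵃ[ℝ] ℝ) :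
    ConvexOn ℝ univ ℓ :=
  ⟨convex_univ, fun _ _ _ _ _ _ _ _ hab => (Convex.combo_affine_apply hab).le⟩

lemma ConvexOn.finset_sup' {E ι : Type*} [AddCommGroup E] [Module ℝ E] {s : Finset ι}
    (hs : s.Nonempty) {g : ι → E → ℝ} (hg : ∀ i ∈ s, ConvexOn ℝ univ (g i)) :
    ConvexOn ℝ univ (s.sup' hs g) :=
  Finset.sup'_induction hs g (fun _ h₁ _ h₂ => h₁.sup h₂) hg

lemma convexOn_sup'_affine {E ι : Type*} [AddCommGroup E] [Module ℝ E] {s : Finset ι}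
    (hs : s.Nonempty) (ℓ : ι → E →ᵃ[ℝ] ℝ) : ConvexOn ℝ univ (s.sup' hs fun a => ⇑(ℓ a)) :=
  ConvexOn.finset_sup' hs fun a _ => (ℓ a).convexOn_univ

lemma continuous_sup'_affine {n : ℕ} {ι : Type*} {s : Finset ι} (hs : s.Nonempty)
    (ℓ : ι → Vn n →ᵃ[ℝ] ℝ) : Continuous (s.sup' hs fun a => ⇑(ℓ a)) :=
  Continuous.finset_sup' hs fun a _ => (ℓ a).continuous_of_finiteDimensional

lemma ConvexOn.partialSups {E : Type*} [AddCommGroup E] [Module ℝ E] {f : ℕ → E → ℝ} {k : ℕ}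
    (hf : ∀ i ≤ k, ConvexOn ℝ univ (f i)) : ConvexOn ℝ univ (partialSups f k) := by
  rw [partialSups_eq_sup'_range]
  exact ConvexOn.finset_sup' _ fun i hi => hf i (Nat.lt_succ_iff.1 (Finset.mem_range.1 hi))

lemma iSup_coe_partialSups_apply {X : Type*} (g : ℕ → X → ℝ) (x : X) :
    ⨆ k, (partialSups g k x : EReal) = ⨆ i, (g i x : EReal) := by
  refine le_antisymm (iSup_le fun k => ?_)
    (iSup_mono fun i => EReal.coe_le_coe_iff.2 (le_partialSups g i x))
  obtain ⟨i, -, hi⟩ := exists_partialSups_eq (fun i => g i x) k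
  rw [Pi.partialSups_apply, hi]
  exact le_iSup (fun i => (g i x : EReal)) i

end MaxAffine

section ClosedConvex

def effDom {X : Type*} (f : X → EReal) : Set X := {x | f x ≠ ⊤}

open Classical in
def restrictTo {X : Type*} (s : Set X) (f : X → EReal) : X → EReal :=
  fun x => if x ∈ s then f x else ⊤

section restrictTo

variable {X : Type*} {s t : Set X} {f : X → EReal}

lemma restrictTo_of_mem {x : X} (hx : x ∈ s) : restrictTo s f x = f x := if_pos hx

lemma restrictTo_of_notMem {x : X} (hx : x ∉ s) : restrictTo s f x = ⊤ := if_neg hx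

lemma le_restrictTo (x : X) : f x ≤ restrictTo s f x := by
  by_cases hx : x ∈ s
  · rw [restrictTo_of_mem hx]
  · rw [restrictTo_of_notMem hx]; exact le_top

lemma restrictTo_ne_bot (hf : ∀ x, f x ≠ ⊥) (x : X) : restrictTo s f x ≠ ⊥ :=
  ne_bot_of_le_ne_bot (hf x) (le_restrictTo x)

lemma effDom_restrictTo : effDom (restrictTo s f) = s ∩ effDom f := by
  ext x
  by_cases hx : x ∈ s
  · simp [effDom, restrictTo_of_mem hx, hx]
  · simp [effDom, restrictTo_of_notMem hx, hx]

lemma restrictTo_eq_self (h : effDom f ⊆ s) : restrictTo s f = f := by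
  funext x
  by_cases hx : x ∈ s
  · exact restrictTo_of_mem hx
  · rw [restrictTo_of_notMem hx]
    by_contra hfx
    exact hx (h (Ne.symm hfx))

lemma restrictTo_sup (g : X → EReal) :
    restrictTo s (f ⊔ g) = restrictTo s f ⊔ g := by
  funext x
  by_cases hx : x ∈ s
  · simp [restrictTo_of_mem hx]
  · simp [restrictTo_of_notMem hx]

lemma restrictTo_sup_restrictTo : restrictTo s f ⊔ restrictTo t f = restrictTo (s ∩ t) f := by
  funext x
  by_cases hs : x ∈ s <;> by_cases ht : x ∈ t <;>
    simp [restrictTo_of_mem, restrictTo_of_notMem, hs, ht]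

lemma restrictTo_inf_restrictTo (hst : s ∪ t = univ) : restrictTo s f ⊓ restrictTo t f = f := by
  funext x
  have hx : x ∈ s ∪ t := hst ▸ mem_univ x
  rcases hx with hs | ht
  · by_cases ht : x ∈ t <;> simp [restrictTo_of_mem, restrictTo_of_notMem, hs, ht]
  · by_cases hs : x ∈ s <;> simp [restrictTo_of_mem, restrictTo_of_notMem, hs, ht]

lemma LowerSemicontinuous.restrictTo [TopologicalSpace X] (hf : LowerSemicontinuous f)
    (hs : IsClosed s) : LowerSemicontinuous (restrictTo s f) := by
  intro x y hy
  by_cases hx : x ∈ s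
  · rw [restrictTo_of_mem hx] at hy
    filter_upwards [hf x y hy] with x' hx' using hx'.trans_le (le_restrictTo x')
  · rw [restrictTo_of_notMem hx] at hy
    filter_upwards [hs.isOpen_compl.mem_nhds hx] with x' hx'
    rwa [restrictTo_of_notMem hx']

end restrictTo

variable {n : ℕ}

namespace IsConvexFn

variable {f g : Vn n → EReal}

lemma sup (hf : IsConvexFn f) (hg : IsConvexFn g) : IsConvexFn (f ⊔ g) := by
  intro x y t ht ht'
  have h1 : (0 : ℝ) ≤ 1 - t := by linarith
  exact sup_le
    ((hf x y t ht ht').trans (EReal.coe_mul_add_coe_mul_le ht.le h1 le_sup_left le_sup_left))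
    ((hg x y t ht ht').trans (EReal.coe_mul_add_coe_mul_le ht.le h1 le_sup_right le_sup_right))

lemma restrictTo (hf : IsConvexFn f) (hbot : ∀ x, f x ≠ ⊥) {s : Set (Vn n)} (hs : Convex ℝ s) :
    IsConvexFn (restrictTo s f) := by
  intro x y t ht ht'
  by_cases hxy : x ∈ s ∧ y ∈ s
  · rw [restrictTo_of_mem hxy.1, restrictTo_of_mem hxy.2,
      restrictTo_of_mem (hs hxy.1 hxy.2 ht.le (by linarith) (by ring))]
    exact hf x y t ht ht'
  · rw [EReal.coe_mul_add_coe_mul_eq_top ht (by linarith) (restrictTo_ne_bot hbot x)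
      (restrictTo_ne_bot hbot y)]
    · exact le_top
    · rw [not_and_or] at hxy
      exact hxy.imp restrictTo_of_notMem restrictTo_of_notMem

lemma convex_effDom (hf : IsConvexFn f) (hbot : ∀ x, f x ≠ ⊥) : Convex ℝ (effDom f) := by
  refine convex_iff_forall_pos.2 fun x hx y hy a b ha hb hab => ?_
  obtain rfl : b = 1 - a := by linarith
  refine ne_top_of_le_ne_top ?_ (hf x y a ha (by linarith))
  lift f x to ℝ using ⟨hx, hbot x⟩ with r
  lift f y to ℝ using ⟨hy, hbot y⟩ with r'
  exact_mod_cast EReal.coe_ne_top (a * r + (1 - a) * r')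

lemma convex_epigraph (hf : IsConvexFn f) : Convex ℝ {p : Vn n × ℝ | f p.1 ≤ p.2} := by
  refine convex_iff_forall_pos.2 fun p hp q hq a b ha hb hab => ?_
  obtain rfl : b = 1 - a := by linarith
  calc f (a • p.1 + (1 - a) • q.1) ≤ (a : EReal) * f p.1 + ((1 - a : ℝ) : EReal) * f q.1 :=
        hf p.1 q.1 a ha (by linarith)
    _ ≤ (a : EReal) * p.2 + ((1 - a : ℝ) : EReal) * q.2 :=
        EReal.coe_mul_add_coe_mul_le ha.le hb.le hp hq
    _ = ((a • p + (1 - a) • q).2 : ℝ) := by simp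

end IsConvexFn

lemma isConvexFn_coe {g : Vn n → ℝ} (hg : ConvexOn ℝ univ g) :
    IsConvexFn fun x => (g x : EReal) := by
  intro x y t ht ht'
  have := hg.2 (mem_univ x) (mem_univ y) ht.le (by linarith : (0 : ℝ) ≤ 1 - t) (by ring)
  simp only [smul_eq_mul] at this
  dsimp only
  exact_mod_cast this

/-- Unlike `ConvSet n`, this class is stable under restriction to closed convex sets, since the
constant `+∞` is allowed. -/
def ClosedConvexFn (n : ℕ) : Set (Vn n → EReal) :=
  {f | IsConvexFn f ∧ LowerSemicontinuous f ∧ ∀ x, f x ≠ ⊥}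

lemma mem_convSet_iff {f : Vn n → EReal} :
    f ∈ ConvSet n ↔ f ∈ ClosedConvexFn n ∧ (effDom f).Nonempty := by
  simp only [ConvSet, ClosedConvexFn, effDom, Set.mem_ofPred_eq, Set.Nonempty, and_assoc]

lemma restrictTo_mem_closedConvexFn {f : Vn n → EReal} (hf : f ∈ ClosedConvexFn n)
    {s : Set (Vn n)} (hs : Convex ℝ s) (hsc : IsClosed s) : restrictTo s f ∈ ClosedConvexFn n :=
  ⟨hf.1.restrictTo hf.2.2 hs, hf.2.1.restrictTo hsc, restrictTo_ne_bot hf.2.2⟩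

lemma sup_coe_mem_closedConvexFn {f : Vn n → EReal} (hf : f ∈ ClosedConvexFn n) {g : Vn n → ℝ}
    (hg : ConvexOn ℝ univ g) (hgc : Continuous g) :
    (f ⊔ fun x => (g x : EReal)) ∈ ClosedConvexFn n :=
  ⟨hf.1.sup (isConvexFn_coe hg),
    hf.2.1.sup (continuous_coe_real_ereal.comp hgc).lowerSemicontinuous,
    fun x h => hf.2.2 x (sup_eq_bot_iff.1 h).1⟩

end ClosedConvex

section Defect

variable {n : ℕ} (Z : (Vn n → EReal) → ℝ)

open Classical in
/-- Setting `Z (+∞) = 0` makes the valuation identity hold for every cut of a closed convex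
function by two closed convex sets, including cuts where one piece is empty. -/
def extendByZero (f : Vn n → EReal) : ℝ := if f ∈ ConvSet n then Z f else 0

lemma extendByZero_of_mem {f : Vn n → EReal} (hf : f ∈ ConvSet n) : extendByZero Z f = Z f :=
  if_pos hf

lemma extendByZero_of_effDom_eq_empty {f : Vn n → EReal} (hf : effDom f = ∅) :
    extendByZero Z f = 0 :=
  if_neg fun h => (mem_convSet_iff.1 h).2.ne_empty hf

lemma extendByZero_restrictTo_add (hval : IsValuation (ConvSet n) Z) {g : Vn n → EReal}
    (hg : g ∈ ClosedConvexFn n) {s t : Set (Vn n)} (hs : Convex ℝ s) (hsc : IsClosed s)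
    (ht : Convex ℝ t) (htc : IsClosed t) (hst : s ∪ t = univ) :
    extendByZero Z (restrictTo s g) + extendByZero Z (restrictTo t g) =
      extendByZero Z g + extendByZero Z (restrictTo (s ∩ t) g) := by
  have hempty : ∀ {P}, ¬(effDom g ∩ P).Nonempty → extendByZero Z (restrictTo P g) = 0 :=
    fun h => extendByZero_of_effDom_eq_empty Z
      (by rw [effDom_restrictTo, inter_comm]; exact not_nonempty_iff_eq_empty.1 h)
  by_cases hS : (effDom g ∩ s).Nonempty
  · by_cases hT : (effDom g ∩ t).Nonempty
    · have hST : (effDom g ∩ (s ∩ t)).Nonempty :=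
        isPreconnected_closed_iff.1 (hg.1.convex_effDom hg.2.2).isPreconnected s t hsc htc
          (hst ▸ subset_univ _) hS hT
      have hmem : ∀ {P}, Convex ℝ P → IsClosed P → (effDom g ∩ P).Nonempty →
          restrictTo P g ∈ ConvSet n := fun hP hPc hne =>
        mem_convSet_iff.2
          ⟨restrictTo_mem_closedConvexFn hg hP hPc, by rwa [effDom_restrictTo, inter_comm]⟩
      have hgC : g ∈ ConvSet n := mem_convSet_iff.2 ⟨hg, hS.mono inter_subset_left⟩
      have hST' := hmem (hs.inter ht) (hsc.inter htc) hST
      have hv := hval _ _ (hmem hs hsc hS) (hmem ht htc hT)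
        (restrictTo_sup_restrictTo ▸ hST') ((restrictTo_inf_restrictTo hst).symm ▸ hgC)
      rw [restrictTo_sup_restrictTo, restrictTo_inf_restrictTo hst] at hv
      rw [extendByZero_of_mem Z (hmem hs hsc hS), extendByZero_of_mem Z (hmem ht htc hT),
        extendByZero_of_mem Z hgC, extendByZero_of_mem Z hST']
      linarith
    · have hsub : effDom g ⊆ s := fun x hx =>
        (hst ▸ mem_univ x : x ∈ s ∪ t).resolve_right fun hxt => hT ⟨x, hx, hxt⟩
      rw [restrictTo_eq_self hsub, hempty hT,
        hempty fun h => hT (h.mono (inter_subset_inter_right _ inter_subset_right))]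
  · have hsub : effDom g ⊆ t := fun x hx =>
      (hst ▸ mem_univ x : x ∈ s ∪ t).resolve_left fun hxs => hS ⟨x, hx, hxs⟩
    rw [restrictTo_eq_self hsub, hempty hS,
      hempty fun h => hS (h.mono (inter_subset_inter_right _ inter_subset_left)), add_comm]

variable {m : ℕ} (q : Fin m → Vn n → ℝ)

def coeSup (J : Finset (Fin m)) : Vn n → EReal := fun x => J.sup fun j => (q j x : EReal)

lemma coeSup_eq_coe_sup' {J : Finset (Fin m)} (hJ : J.Nonempty) :
    coeSup q J = fun x => ((J.sup' hJ q x : ℝ) : EReal) := by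
  funext x
  rw [Finset.sup'_apply,
    Finset.apply_sup'_eq_sup'_comp hJ _ fun a b => EReal.coe_strictMono.monotone.map_sup a b,
    Finset.sup'_eq_sup]
  rfl

variable {q}

lemma sup_coeSup_mem_closedConvexFn {f : Vn n → EReal} (hf : f ∈ ClosedConvexFn n)
    (hqv : ∀ j, ConvexOn ℝ univ (q j)) (hqc : ∀ j, Continuous (q j))
    {J : Finset (Fin m)} (hJ : J.Nonempty) : f ⊔ coeSup q J ∈ ClosedConvexFn n := by
  rw [coeSup_eq_coe_sup' q hJ]
  exact sup_coe_mem_closedConvexFn hf (ConvexOn.finset_sup' hJ fun j _ => hqv j)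
    (Continuous.finset_sup' hJ fun j _ => hqc j)

lemma effDom_sup_coeSup (f : Vn n → EReal) {J : Finset (Fin m)} (hJ : J.Nonempty) :
    effDom (f ⊔ coeSup q J) = effDom f := by
  ext x
  simp [effDom, coeSup_eq_coe_sup' q hJ]

lemma sup_coeSup_mem_convSet {f : Vn n → EReal} (hf : f ∈ ConvSet n)
    (hqv : ∀ j, ConvexOn ℝ univ (q j)) (hqc : ∀ j, Continuous (q j))
    {J : Finset (Fin m)} (hJ : J.Nonempty) : f ⊔ coeSup q J ∈ ConvSet n :=
  mem_convSet_iff.2 ⟨sup_coeSup_mem_closedConvexFn (mem_convSet_iff.1 hf).1 hqv hqc hJ,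
    by rw [effDom_sup_coeSup f hJ]; exact (mem_convSet_iff.1 hf).2⟩

variable (q)

def inclExclDefect (f : Vn n → EReal) : ℝ :=
  extendByZero Z f - ∑ J ∈ Finset.univ.powerset.filter (fun J : Finset (Fin m) => J.Nonempty),
    (-1 : ℝ) ^ (J.card - 1) * extendByZero Z (f ⊔ coeSup q J)

end Defect

section Core

variable {n m : ℕ} (Z : (Vn n → EReal) → ℝ) {q : Fin m → Vn n → ℝ}

lemma inclExclDefect_eq_restrictTo (hval : IsValuation (ConvSet n) Z)
    (hqv : ∀ j, ConvexOn ℝ univ (q j)) (hqc : ∀ j, Continuous (q j))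
    {f : Vn n → EReal} (hf : f ∈ ClosedConvexFn n) {s t : Set (Vn n)} (hs : Convex ℝ s)
    (hsc : IsClosed s) (ht : Convex ℝ t) (htc : IsClosed t) (hst : s ∪ t = univ) :
    inclExclDefect Z q f =
      inclExclDefect Z q (restrictTo s f) + inclExclDefect Z q (restrictTo t f) -
      inclExclDefect Z q (restrictTo (s ∩ t) f) := by
  have hsum := Finset.sum_congr rfl fun J (hJ : J ∈ Finset.univ.powerset.filter
      (fun J : Finset (Fin m) => J.Nonempty)) =>
    congrArg ((-1 : ℝ) ^ (J.card - 1) * ·) (extendByZero_restrictTo_add Z hval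
      (sup_coeSup_mem_closedConvexFn hf hqv hqc (Finset.mem_filter.1 hJ).2) hs hsc ht htc hst)
  simp only [mul_add, Finset.sum_add_distrib] at hsum
  simp only [inclExclDefect, ← restrictTo_sup]
  linear_combination hsum - extendByZero_restrictTo_add Z hval hf hs hsc ht htc hst

lemma inclExclDefect_eq_zero_of_total {f : Vn n → EReal} (hle : ∀ x, ∃ j, (q j x : EReal) ≤ f x)
    (htot : ∀ i j, (∀ x ∈ effDom f, q i x ≤ q j x) ∨ (∀ x ∈ effDom f, q j x ≤ q i x)) :
    inclExclDefect Z q f = 0 := by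
  have : Nonempty (Fin m) := ⟨(hle 0).choose⟩
  obtain ⟨j₀, hj₀⟩ := exists_forall_of_total htot
    fun i j k hij hjk x hx => (hij x hx).trans (hjk x hx)
  have habsorb : ∀ J : Finset (Fin m), J.Nonempty →
      f ⊔ coeSup q (insert j₀ J) = f ⊔ coeSup q J := by
    rintro J ⟨j, hj⟩
    funext x
    by_cases hx : x ∈ effDom f
    · simp only [Pi.sup_apply, coeSup, Finset.sup_insert]
      rw [sup_eq_right.2 ((EReal.coe_le_coe_iff.2 (hj₀ j x hx)).trans
        (Finset.le_sup (f := fun j => (q j x : EReal)) hj))]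
    · simp [not_not.1 hx]
  have hsingle : f ⊔ coeSup q {j₀} = f := by
    funext x
    by_cases hx : x ∈ effDom f
    · obtain ⟨j, hj⟩ := hle x
      simpa [coeSup] using (EReal.coe_le_coe_iff.2 (hj₀ j x hx)).trans hj
    · simp [not_not.1 hx]
  rw [inclExclDefect, sum_nonempty_neg_one_pow_of_insert_eq _ j₀ fun J hJ => by rw [habsorb J hJ],
    hsingle, sub_self]

variable {ι : Type*} (s : Finset ι) (hs : s.Nonempty) (ℓ : Fin m → ι → Vn n →ᵃ[ℝ] ℝ)

/-- Cutting `f` along the hyperplanes `ℓ j a = ℓ j' b` leaves pieces on whose domains the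
piecewise affine functions `q j = max_a ℓ j a` are totally ordered. -/
lemma inclExclDefect_eq_zero_of_signConstOn (hval : IsValuation (ConvSet n) Z) :
    ∀ (L : List (Vn n →ᵃ[ℝ] ℝ)) (f : Vn n → EReal), f ∈ ClosedConvexFn n →
      (∀ x, ∃ j, ((s.sup' hs fun a => ⇑(ℓ j a)) x : EReal) ≤ f x) →
      (∀ j j', ∀ a ∈ s, ∀ b ∈ s, ℓ j a - ℓ j' b ∈ L ∨ SignConstOn (effDom f) ⇑(ℓ j a - ℓ j' b)) →
      inclExclDefect Z (fun j => s.sup' hs fun a => ⇑(ℓ j a)) f = 0 := by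
  intro L
  induction L with
  | nil =>
    intro f _ hle hsign
    refine inclExclDefect_eq_zero_of_total Z hle fun j j' => Finset.sup'_le_or_ge_on hs hs ?_
    intro a ha b hb
    simpa using (hsign j j' a ha b hb).resolve_left List.not_mem_nil
  | cons φ L ih =>
    intro f hf hle hsign
    have hpiece : ∀ P : Set (Vn n), Convex ℝ P → IsClosed P → SignConstOn P φ →
        inclExclDefect Z (fun j => s.sup' hs fun a => ⇑(ℓ j a)) (restrictTo P f) = 0 := by
      intro P hP hPc hφ
      refine ih _ (restrictTo_mem_closedConvexFn hf hP hPc)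
        (fun x => (hle x).imp fun j h => h.trans (le_restrictTo x)) fun j j' a ha b hb => ?_
      rw [effDom_restrictTo]
      rcases hsign j j' a ha b hb with hmem | hconst
      · rcases List.mem_cons.1 hmem with heq | hmem
        · exact Or.inr (heq ▸ hφ.mono inter_subset_left)
        · exact Or.inl hmem
      · exact Or.inr (hconst.mono inter_subset_right)
    have hφc : Continuous φ := φ.continuous_of_finiteDimensional
    have hconvPos := (convex_Ici (0 : ℝ)).affine_preimage φ
    have hconvNeg := (convex_Iic (0 : ℝ)).affine_preimage φ
    have hclPos : IsClosed (φ ⁻¹' Ici 0) := isClosed_Ici.preimage hφc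
    have hclNeg : IsClosed (φ ⁻¹' Iic 0) := isClosed_Iic.preimage hφc
    rw [inclExclDefect_eq_restrictTo Z hval (fun j => convexOn_sup'_affine hs (ℓ j))
        (fun j => continuous_sup'_affine hs (ℓ j)) hf hconvPos hclPos hconvNeg hclNeg
        (by ext x; simp [le_total]),
      hpiece _ hconvPos hclPos (Or.inl fun x hx => hx), hpiece _ hconvNeg hclNeg (Or.inr fun x hx => hx),
      hpiece _ (hconvPos.inter hconvNeg) (hclPos.inter hclNeg) (Or.inl fun x hx => hx.1)]
    ring

theorem inclusion_exclusion_piecewise_affine (hval : IsValuation (ConvSet n) Z) {w : Vn n → EReal}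
    (hw : w ∈ ConvSet n) (hle : ∀ x, ∃ j, ((s.sup' hs fun a => ⇑(ℓ j a)) x : EReal) ≤ w x) :
    Z w = ∑ J ∈ Finset.univ.powerset.filter (fun J : Finset (Fin m) => J.Nonempty),
      (-1 : ℝ) ^ (J.card - 1) * Z (w ⊔ coeSup (fun j => s.sup' hs fun a => ⇑(ℓ j a)) J) := by
  have hzero := inclExclDefect_eq_zero_of_signConstOn Z s hs ℓ hval
    (((Finset.univ ×ˢ s) ×ˢ (Finset.univ ×ˢ s)).toList.map fun p => ℓ p.1.1 p.1.2 - ℓ p.2.1 p.2.2)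
    w (mem_convSet_iff.1 hw).1 hle fun j j' a ha b hb =>
      Or.inl (List.mem_map.2 ⟨((j, a), (j', b)), by simp [ha, hb], rfl⟩)
  rw [inclExclDefect, extendByZero_of_mem Z hw, sub_eq_zero] at hzero
  rw [hzero]
  refine Finset.sum_congr rfl fun J hJ => ?_
  rw [extendByZero_of_mem Z (sup_coeSup_mem_convSet hw (fun j => convexOn_sup'_affine hs (ℓ j))
    (fun j => continuous_sup'_affine hs (ℓ j)) (Finset.mem_filter.1 hJ).2)]

end Core

section AffineMinorant

lemma LowerSemicontinuous.isClosed_real_epigraph {X : Type*} [TopologicalSpace X] {u : X → EReal}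
    (hu : LowerSemicontinuous u) : IsClosed {p : X × ℝ | u p.1 ≤ p.2} :=
  hu.isClosed_epigraph.preimage
    (continuous_fst.prodMk (continuous_coe_real_ereal.comp continuous_snd))

variable {n : ℕ} {u : Vn n → EReal}

lemma exists_separation_of_lt (hu : u ∈ ConvSet n) {x : Vn n} {r : ℝ} (hr : (r : EReal) < u x) :
    ∃ (L : Vn n →L[ℝ] ℝ) (a c : ℝ), 0 ≤ a ∧ L x + a * r < c ∧
      ∀ y (t : ℝ), u y ≤ t → c ≤ L y + a * t := by
  obtain ⟨g, c, hgx, hgepi⟩ := geometric_hahn_banach_point_closed hu.1.convex_epigraph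
    hu.2.1.isClosed_real_epigraph (show (x, r) ∉ {p : Vn n × ℝ | u p.1 ≤ p.2} from not_le.2 hr)
  have hg : ∀ y t, g (y, t) = g.comp (.inl ℝ _ ℝ) y + g (0, 1) * t := by
    intro y t
    calc g (y, t) = g ((y, 0) + t • (0, 1)) := by simp
      _ = _ := by rw [map_add, map_smul]; simp [mul_comm]
  refine ⟨g.comp (.inl ℝ _ ℝ), g (0, 1), c, ?_, hg x r ▸ hgx,
    fun y t hyt => hg y t ▸ (hgepi (y, t) hyt).le⟩
  obtain ⟨y₀, hy₀⟩ := (mem_convSet_iff.1 hu).2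
  have hfin : u y₀ = (u y₀).toReal := (EReal.coe_toReal hy₀ (hu.2.2.1 y₀)).symm
  exact nonneg_of_forall_le_add_mul fun t ht =>
    hg y₀ t ▸ (hgepi (y₀, t) (hfin.trans_le (EReal.coe_le_coe_iff.2 ht))).le

lemma exists_affine_minorant (hu : u ∈ ConvSet n) :
    ∃ ℓ : Vn n →ᵃ[ℝ] ℝ, ∀ y, (ℓ y : EReal) ≤ u y := by
  obtain ⟨x, hx⟩ := (mem_convSet_iff.1 hu).2
  have hfin : u x = (u x).toReal := (EReal.coe_toReal hx (hu.2.2.1 x)).symm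
  obtain ⟨L, a, c, -, hlt, hsep⟩ := exists_separation_of_lt hu (r := (u x).toReal - 1)
    (by rw [hfin]; exact_mod_cast sub_one_lt _)
  have ha : 0 < a := by
    have := hsep x _ hfin.le
    linarith [mul_sub a (u x).toReal 1]
  refine ⟨a⁻¹ • (AffineMap.const ℝ (Vn n) c - L.toLinearMap.toAffineMap),
    fun y => EReal.coe_le_of_forall_le_coe fun t ht => ?_⟩
  have := hsep y t ht
  simp only [AffineMap.coe_smul, AffineMap.coe_sub, AffineMap.coe_const, Pi.smul_apply,
    Pi.sub_apply, Function.const_apply, LinearMap.coe_toAffineMap, ContinuousLinearMap.coe_coe,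
    smul_eq_mul]
  rw [inv_mul_le_iff₀ ha]
  linarith

/-- Given a separating functional `L x + a t` at `(x, r)`, tilting a fixed minorant `ℓ₀` by a
large multiple of `c - L` yields a minorant above `r` at `x`, even when `a = 0`. -/
lemma exists_affine_minorant_gt (hu : u ∈ ConvSet n) {x : Vn n} {r : ℝ} (hr : (r : EReal) < u x) :
    ∃ ℓ : Vn n →ᵃ[ℝ] ℝ, (∀ y, (ℓ y : EReal) ≤ u y) ∧ r < ℓ x := by
  obtain ⟨ℓ₀, hℓ₀⟩ := exists_affine_minorant hu
  obtain ⟨L, a, c, ha, hlt, hsep⟩ := exists_separation_of_lt hu hr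
  have hgap : 0 < c - L x - a * r := by linarith
  obtain ⟨k, hk⟩ := exists_nat_gt ((r - ℓ₀ x) / (c - L x - a * r))
  rw [div_lt_iff₀ hgap] at hk
  have hpos : 0 < 1 + k * a := by positivity
  refine ⟨(1 + k * a)⁻¹ • (ℓ₀ + (k : ℝ) • (AffineMap.const ℝ (Vn n) c - L.toLinearMap.toAffineMap)),
    fun y => EReal.coe_le_of_forall_le_coe fun t ht => ?_, ?_⟩ <;>
  simp only [AffineMap.coe_smul, AffineMap.coe_add, AffineMap.coe_sub, AffineMap.coe_const,
    Pi.smul_apply, Pi.add_apply, Pi.sub_apply, Function.const_apply, LinearMap.coe_toAffineMap,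
    ContinuousLinearMap.coe_coe, smul_eq_mul]
  · have hℓ₀t : ℓ₀ y ≤ t := by exact_mod_cast (hℓ₀ y).trans ht
    have := mul_le_mul_of_nonneg_left (sub_le_iff_le_add'.2 (hsep y t ht)) k.cast_nonneg
    rw [inv_mul_le_iff₀ hpos]
    linarith
  · rw [lt_inv_mul_iff₀ hpos]
    linarith

theorem exists_seq_affine_iSup_eq (hu : u ∈ ConvSet n) :
    ∃ ℓ : ℕ → Vn n →ᵃ[ℝ] ℝ, ∀ x, ⨆ i, (ℓ i x : EReal) = u x := by
  let M := {ℓ : Vn n →ᵃ[ℝ] ℝ // ∀ y, (ℓ y : EReal) ≤ u y}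
  obtain ⟨T, hTc, hT⟩ := TopologicalSpace.isOpen_iUnion_countable
    (fun ℓ : M => {p : Vn n × ℝ | p.2 < ℓ.1 p.1})
    fun ℓ => isOpen_lt continuous_snd (ℓ.1.continuous_of_finiteDimensional.comp continuous_fst)
  obtain ⟨ℓ₀, hℓ₀⟩ := exists_affine_minorant hu
  obtain ⟨e, he⟩ := (hTc.insert (⟨ℓ₀, hℓ₀⟩ : M)).exists_eq_range (insert_nonempty _ _)
  refine ⟨fun i => (e i).1, fun x => le_antisymm (iSup_le fun i => (e i).2 x) ?_⟩
  refine EReal.ge_of_forall_gt_iff_ge.1 fun r hr => ?_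
  obtain ⟨ℓ, hℓ, hℓx⟩ := exists_affine_minorant_gt hu hr
  have hmem : (x, r) ∈ ⋃ ℓ ∈ T, {p : Vn n × ℝ | p.2 < ℓ.1 p.1} :=
    hT ▸ mem_iUnion.2 ⟨⟨ℓ, hℓ⟩, hℓx⟩
  obtain ⟨ℓ', hℓ'T, hℓ'x⟩ := mem_iUnion₂.1 hmem
  obtain ⟨i, rfl⟩ : ℓ' ∈ range e := he ▸ mem_insert_of_mem _ hℓ'T
  exact (EReal.coe_le_coe_iff.2 hℓ'x.le).trans (le_iSup (fun i => ((e i).1 x : EReal)) i)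

end AffineMinorant

section Limit

variable {n m : ℕ}

lemma epiConverges_of_monotone {v : ℕ → Vn n → EReal} {V : Vn n → EReal}
    (hlsc : ∀ k, LowerSemicontinuous (v k)) (hmono : Monotone v) (hsup : ∀ x, ⨆ k, v k x = V x) :
    EpiConverges v V := by
  intro x
  refine ⟨fun xk hxk => ?_, fun _ => x, tendsto_const_nhds,
    hsup x ▸ tendsto_atTop_iSup fun i j hij => hmono hij x⟩
  rw [← hsup x]
  refine iSup_le fun K => ?_
  rw [Filter.le_liminf_iff]
  intro y hy
  filter_upwards [hxk.eventually (hlsc K x y hy), eventually_ge_atTop K] with k hk hKk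
  exact hk.trans_le (hmono hKk _)

lemma tendsto_sup_coeSup {Z : (Vn n → EReal) → ℝ} (hcont : ContinuousVal (ConvSet n) Z)
    {w : Vn n → EReal} (hw : w ∈ ConvSet n) {q : ℕ → Fin m → Vn n → ℝ}
    (hqv : ∀ k j, ConvexOn ℝ univ (q k j)) (hqc : ∀ k j, Continuous (q k j)) (hmono : Monotone q)
    {u : Fin m → Vn n → EReal} (hsup : ∀ j x, ⨆ k, (q k j x : EReal) = u j x)
    {J : Finset (Fin m)} (hJ : J.Nonempty) (hwu : w ≤ fun x => J.sup fun j => u j x)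
    (huJ : (fun x => J.sup fun j => u j x) ∈ ConvSet n) :
    Tendsto (fun k => Z (w ⊔ coeSup (q k) J)) atTop (𝓝 (Z fun x => J.sup fun j => u j x)) := by
  refine hcont _ _ (fun k => sup_coeSup_mem_convSet hw (hqv k) (hqc k) hJ) huJ
    (epiConverges_of_monotone
      (fun k => (sup_coeSup_mem_closedConvexFn (mem_convSet_iff.1 hw).1 (hqv k) (hqc k) hJ).2.1)
      (fun k k' hkk' x => sup_le_sup_left
        (Finset.sup_mono_fun fun j _ => EReal.coe_le_coe_iff.2 (hmono hkk' j x)) _)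
      fun x => ?_)
  have hJsup : ⨆ k, coeSup (q k) J x = J.sup fun j => u j x :=
    le_antisymm
      (iSup_le fun k => Finset.sup_mono_fun fun j _ =>
        hsup j x ▸ le_iSup (fun k => (q k j x : EReal)) k)
      (Finset.sup_le fun j hj => hsup j x ▸
        iSup_mono fun k => Finset.le_sup (f := fun j => (q k j x : EReal)) hj)
  simp only [Pi.sup_apply]
  rw [← sup_iSup, hJsup, sup_eq_right.2 (hwu x)]

lemma inclusion_exclusion_partialSups {Z : (Vn n → EReal) → ℝ}
    (hval : IsValuation (ConvSet n) Z) {u : Fin m → Vn n → EReal}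
    (hmin : (fun x => Finset.univ.inf fun j => u j x) ∈ ConvSet n) (ℓ : Fin m → ℕ → Vn n →ᵃ[ℝ] ℝ)
    (hℓ : ∀ j x, ⨆ k, (partialSups (fun i => ⇑(ℓ j i)) k x : EReal) = u j x) (k : ℕ) :
    Z (fun x => Finset.univ.inf fun j => u j x) =
      ∑ J ∈ Finset.univ.powerset.filter (fun J : Finset (Fin m) => J.Nonempty),
        (-1 : ℝ) ^ (J.card - 1) * Z ((fun x => Finset.univ.inf fun j => u j x) ⊔
          coeSup (fun j => partialSups (fun i => ⇑(ℓ j i)) k) J) := by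
  have hne : (Finset.univ : Finset (Fin m)).Nonempty := by
    obtain ⟨x, hx⟩ := (mem_convSet_iff.1 hmin).2
    exact Finset.nonempty_iff_ne_empty.2 fun h => hx (by simp [h])
  have hle : ∀ x, ∃ j, (partialSups (fun i => ⇑(ℓ j i)) k x : EReal) ≤
      Finset.univ.inf fun j => u j x := fun x => by
    obtain ⟨j, -, hj⟩ := Finset.exists_mem_eq_inf Finset.univ hne fun j => u j x
    exact ⟨j, hj ▸ hℓ j x ▸
      le_iSup (fun k => (partialSups (fun i => ⇑(ℓ j i)) k x : EReal)) k⟩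
  simp only [partialSups_eq_sup'_range] at hle ⊢
  exact inclusion_exclusion_piecewise_affine Z _ _ ℓ hval hmin hle

end Limit

/-- **Inclusion-exclusion principle** (Theorem 3.1): a continuous valuation
`Z` on `Conv(ℝⁿ)` satisfies
`Z(u₁ ∧ ⋯ ∧ u_m) = Σ_{∅ ≠ J ⊆ {1,…,m}} (−1)^{|J|−1} Z(⋁_{j ∈ J} u_j)`
whenever all the functions involved belong to `Conv(ℝⁿ)`.
(Here `Finset.inf`/`Finset.sup` of the values give the pointwise minimum and
maximum.) -/
theorem inclusion_exclusion (n : ℕ) (Z : (Vn n → EReal) → ℝ)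
    (hcont : ContinuousVal (ConvSet n) Z)
    (hval : IsValuation (ConvSet n) Z)
    (m : ℕ) (u : Fin m → Vn n → EReal)
    (hu : ∀ j, u j ∈ ConvSet n)
    (hmin : (fun x => Finset.univ.inf (fun j => u j x)) ∈ ConvSet n)
    (hmax : ∀ J : Finset (Fin m), J.Nonempty →
      (fun x => J.sup (fun j => u j x)) ∈ ConvSet n) :
    Z (fun x => Finset.univ.inf (fun j => u j x)) =
      ∑ J ∈ Finset.univ.powerset.filter (fun J : Finset (Fin m) => J.Nonempty),
        (-1 : ℝ) ^ (J.card - 1) * Z (fun x => J.sup (fun j => u j x)) := by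
  choose ℓ hℓ using fun j => exists_seq_affine_iSup_eq (hu j)
  have hsup : ∀ j x, ⨆ k, (partialSups (fun i => ⇑(ℓ j i)) k x : EReal) = u j x := fun j x =>
    (iSup_coe_partialSups_apply _ x).trans (hℓ j x)
  refine tendsto_nhds_unique
    (tendsto_const_nhds.congr (inclusion_exclusion_partialSups hval hmin ℓ hsup))
    (tendsto_finsetSum _ fun J hJ => (tendsto_sup_coeSup hcont hmin
      (q := fun k j => partialSups (fun i => ⇑(ℓ j i)) k)
      (fun k j => ConvexOn.partialSups fun i _ => (ℓ j i).convexOn_univ)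
      (fun k j => Continuous.partialSups fun i _ => (ℓ j i).continuous_of_finiteDimensional)
      (fun k k' hkk' j => (partialSups _).monotone hkk') hsup (Finset.mem_filter.1 hJ).2
      (fun x => ?_) (hmax J (Finset.mem_filter.1 hJ).2)).const_mul _)
  obtain ⟨j, hj⟩ := (Finset.mem_filter.1 hJ).2
  exact (Finset.inf_le (Finset.mem_univ j)).trans (Finset.le_sup (f := fun j => u j x) hj)
end
end

section
/- A functional Z : Conv(ℝⁿ;ℝ) → ℝ is a continuous and dually epi-translation invariant valuation that is homogeneous of degree 0, if and only if Z is constant. -/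
open Filter Topology MeasureTheory

noncomputable section

/-- `Conv(ℝⁿ;ℝ)`: finite-valued convex functions on `ℝⁿ`. -/
def ConvFin (n : ℕ) : Set (Vn n → ℝ) := {v | ConvexOn ℝ Set.univ v}

/-- Epi-convergence of a sequence of real-valued functions
(the lower bound condition is stated in `EReal` so that the `liminf` is the
honest extended-real lower limit). -/
def EpiConvergesR {n : ℕ} (vk : ℕ → Vn n → ℝ) (v : Vn n → ℝ) : Prop :=
  ∀ x : Vn n,
    (∀ xk : ℕ → Vn n, Tendsto xk atTop (𝓝 x) →
      (v x : EReal) ≤ liminf (fun k => ((vk k (xk k) : ℝ) : EReal)) atTop) ∧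
    (∃ xk : ℕ → Vn n, Tendsto xk atTop (𝓝 x) ∧
      Tendsto (fun k => vk k (xk k)) atTop (𝓝 (v x)))

/-- Continuity (with respect to epi-convergence) of a functional on a class `X`. -/
def ContinuousValR {n : ℕ} (X : Set (Vn n → ℝ)) (Z : (Vn n → ℝ) → ℝ) : Prop :=
  ∀ (vk : ℕ → Vn n → ℝ) (v : Vn n → ℝ),
    (∀ k, vk k ∈ X) → v ∈ X → EpiConvergesR vk v →
      Tendsto (fun k => Z (vk k)) atTop (𝓝 (Z v))

/-- The valuation property on a class `X` (here `⊔`, `⊓` are the pointwise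
maximum and minimum). -/
def IsValuationR {n : ℕ} (X : Set (Vn n → ℝ)) (Z : (Vn n → ℝ) → ℝ) : Prop :=
  ∀ u v : Vn n → ℝ, u ∈ X → v ∈ X → u ⊔ v ∈ X → u ⊓ v ∈ X →
    Z (u ⊔ v) + Z (u ⊓ v) = Z u + Z v

/-- Dual epi-translation invariance: invariance under addition of affine
functions `v ↦ v + ℓ + c`. -/
def DuallyEpiTranslationInvariant {n : ℕ} (X : Set (Vn n → ℝ)) (Z : (Vn n → ℝ) → ℝ) : Prop :=
  ∀ v ∈ X, ∀ ℓ : Vn n →ₗ[ℝ] ℝ, ∀ c : ℝ, Z (fun x => v x + ℓ x + c) = Z v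

/-- Dual translation invariance: invariance under addition of linear
functions `v ↦ v + ℓ`. -/
def DuallyTranslationInvariant {n : ℕ} (X : Set (Vn n → ℝ)) (Z : (Vn n → ℝ) → ℝ) : Prop :=
  ∀ v ∈ X, ∀ ℓ : Vn n →ₗ[ℝ] ℝ, Z (fun x => v x + ℓ x) = Z v

/-- `Z` is homogeneous of degree `α`: `Z(λ v) = λ^α Z(v)` for `λ > 0`. -/
def HomogeneousR {n : ℕ} (X : Set (Vn n → ℝ)) (Z : (Vn n → ℝ) → ℝ) (α : ℝ) : Prop :=
  ∀ v ∈ X, ∀ l : ℝ, 0 < l → Z (fun x => l * v x) = l ^ α * Z v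

/-!
A `0`-homogeneous functional takes the same value at `v` and at every `v / (k + 1)`.
Since a finite convex `v` is continuous, `v (x_k) / (k + 1) → 0` whenever `x_k → x`, so these
rescalings epi-converge to `0` and continuity forces `Z v = Z 0`. Conversely, a constant
functional has all four properties because `Conv(ℝⁿ;ℝ)` is stable under adding affine
functions and under positive scaling.
-/

namespace ConvFin

variable {n : ℕ} {v : Vn n → ℝ}

theorem continuous (hv : v ∈ ConvFin n) : Continuous v :=
  continuousOn_univ.mp (hv.continuousOn isOpen_univ)

theorem const_mul (hv : v ∈ ConvFin n) {l : ℝ} (hl : 0 ≤ l) :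
    (fun x => l * v x) ∈ ConvFin n :=
  hv.smul hl

theorem add_linearMap_add_const (hv : v ∈ ConvFin n) (ℓ : Vn n →ₗ[ℝ] ℝ) (c : ℝ) :
    (fun x => v x + ℓ x + c) ∈ ConvFin n :=
  (hv.add (ℓ.convexOn convex_univ)).add_const c

theorem const (c : ℝ) : (fun _ => c) ∈ ConvFin n :=
  convexOn_const c convex_univ

end ConvFin

theorem epiConvergesR_of_tendsto_comp {n : ℕ} {vk : ℕ → Vn n → ℝ} {v : Vn n → ℝ}
    (h : ∀ x (xk : ℕ → Vn n), Tendsto xk atTop (𝓝 x) →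
      Tendsto (fun k => vk k (xk k)) atTop (𝓝 (v x))) :
    EpiConvergesR vk v := by
  intro x
  refine ⟨fun xk hxk => ?_, ⟨fun _ => x, tendsto_const_nhds, h x _ tendsto_const_nhds⟩⟩
  have hE : Tendsto (fun k => ((vk k (xk k) : ℝ) : EReal)) atTop (𝓝 (v x : EReal)) :=
    (continuous_coe_real_ereal.tendsto _).comp (h x xk hxk)
  exact hE.liminf_eq.ge

theorem epiConvergesR_mul_zero {n : ℕ} {v : Vn n → ℝ} (hv : Continuous v) {t : ℕ → ℝ}
    (ht : Tendsto t atTop (𝓝 0)) :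
    EpiConvergesR (fun k x => t k * v x) (fun _ => 0) :=
  epiConvergesR_of_tendsto_comp fun x _ hxk => by
    simpa using ht.mul ((hv.tendsto x).comp hxk)

theorem HomogeneousR.apply_eq_apply_zero {n : ℕ} {Z : (Vn n → ℝ) → ℝ}
    (hcont : ContinuousValR (ConvFin n) Z) (hhom : HomogeneousR (ConvFin n) Z 0)
    {v : Vn n → ℝ} (hv : v ∈ ConvFin n) :
    Z v = Z (fun _ => 0) := by
  set t : ℕ → ℝ := fun k => 1 / ((k : ℝ) + 1)
  have ht : ∀ k, 0 < t k := fun k => by positivity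
  have hZ : ∀ k, Z (fun x => t k * v x) = Z v := fun k => by
    simpa using hhom v hv (t k) (ht k)
  have hlim := hcont _ _ (fun k => ConvFin.const_mul hv (ht k).le) (ConvFin.const 0)
    (epiConvergesR_mul_zero (ConvFin.continuous hv) tendsto_one_div_add_atTop_nhds_zero_nat)
  simp only [hZ] at hlim
  exact tendsto_nhds_unique tendsto_const_nhds hlim

section ConstantFunctional

variable {n : ℕ} {X : Set (Vn n → ℝ)} {Z : (Vn n → ℝ) → ℝ} {c : ℝ}

theorem continuousValR_of_eqOn_const (hc : ∀ v ∈ X, Z v = c) : ContinuousValR X Z :=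
  fun _ v hk hv _ => by
    simpa only [hc _ hv, hc _ (hk _)] using tendsto_const_nhds

theorem isValuationR_of_eqOn_const (hc : ∀ v ∈ X, Z v = c) : IsValuationR X Z :=
  fun _ _ hu hv hsup hinf => by
    rw [hc _ hu, hc _ hv, hc _ hsup, hc _ hinf]

theorem duallyEpiTranslationInvariant_of_eqOn_const (hc : ∀ v ∈ ConvFin n, Z v = c) :
    DuallyEpiTranslationInvariant (ConvFin n) Z :=
  fun v hv ℓ c' => by
    rw [hc _ (ConvFin.add_linearMap_add_const hv ℓ c'), hc _ hv]

theorem homogeneousR_zero_of_eqOn_const (hc : ∀ v ∈ ConvFin n, Z v = c) :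
    HomogeneousR (ConvFin n) Z 0 :=
  fun v hv l hl => by
    rw [hc _ (ConvFin.const_mul hv hl.le), hc _ hv, Real.rpow_zero, one_mul]

end ConstantFunctional

/-- **Classification of `0`-homogeneous valuations on `Conv(ℝⁿ;ℝ)`**
(Theorem 7.2): `Z : Conv(ℝⁿ;ℝ) → ℝ` is a continuous and dually
epi-translation invariant valuation that is homogeneous of degree `0` if and
only if `Z` is constant. -/
theorem classification_zero_homogeneous_finite (n : ℕ) (Z : (Vn n → ℝ) → ℝ) :
    (ContinuousValR (ConvFin n) Z ∧ IsValuationR (ConvFin n) Z ∧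
      DuallyEpiTranslationInvariant (ConvFin n) Z ∧
      HomogeneousR (ConvFin n) Z 0) ↔
    (∃ c : ℝ, ∀ v ∈ ConvFin n, Z v = c) := by
  constructor
  · rintro ⟨hcont, -, -, hhom⟩
    exact ⟨Z (fun _ => 0), fun v hv => hhom.apply_eq_apply_zero hcont hv⟩
  · rintro ⟨c, hc⟩
    exact ⟨continuousValR_of_eqOn_const hc, isValuationR_of_eqOn_const hc,
      duallyEpiTranslationInvariant_of_eqOn_const hc, homogeneousR_zero_of_eqOn_const hc⟩
end
end
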